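/- (The Katz index can be solved via the generalized Bellman–Ford algorithm.) Let H_t be the generalized Bellman–Ford iterates for the damped weight matrix A := β • w over ℝ≥0∞. Then for all vertices u, v : V, ⨆_{t : ℕ} (H_t u v) = (if u = v then 1 else 0) + Katz(u,v), where Katz(u,v) := ∑'_{t : ℕ} β^(t+1) * ((w^(t+1)) u v) is the sum over all t ≥ 1 of β^t times the (u,v) entry of the t-th matrix power of w. -/

import Mathlib

open ENNReal

/-- The generalized Bellman–Ford iterates for a weight matrix `A`:
`H 0 = 1` (identity matrix) and `H (t+1) = H t * A + 1`. -/
noncomputable def bellmanFord {V : Type*} [Fintype V] [DecidableEq V]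
    (A : Matrix V V ℝ≥0∞) : ℕ → Matrix V V ℝ≥0∞
  | 0 => 1
  | t + 1 => bellmanFord A t * A + 1

section BellmanFord

variable {V : Type*} [Fintype V] [DecidableEq V]

theorem bellmanFord_eq_sum_range_pow (A : Matrix V V ℝ≥0∞) (t : ℕ) :
    bellmanFord A t = ∑ k ∈ Finset.range (t + 1), A ^ k := by
  induction t with
  | zero => simp [bellmanFord]
  | succ t ih =>
    rw [bellmanFord, ih, Finset.sum_mul, Finset.sum_range_succ' _ (t + 1)]
    simp only [← pow_succ, pow_zero]

theorem iSup_bellmanFord_apply (A : Matrix V V ℝ≥0∞) (u v : V) :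
    ⨆ t : ℕ, bellmanFord A t u v = ∑' k : ℕ, (A ^ k) u v := by
  rw [ENNReal.tsum_eq_iSup_nat' (Filter.tendsto_add_atTop_nat 1)]
  simp only [bellmanFord_eq_sum_range_pow, Matrix.sum_apply]

end BellmanFord

theorem bellmanFord_solves_katz {V : Type*} [Fintype V] [DecidableEq V]
    (w : Matrix V V ℝ≥0∞) (β : ℝ≥0∞) (u v : V) :
    (⨆ t : ℕ, bellmanFord (β • w) t u v) =
      (if u = v then 1 else 0) + ∑' t : ℕ, β ^ (t + 1) * (w ^ (t + 1)) u v := by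
  rw [iSup_bellmanFord_apply, tsum_eq_zero_add' ENNReal.summable]
  simp only [smul_pow, Matrix.smul_apply, smul_eq_mul, pow_zero, Matrix.one_apply]
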